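/- Let G be the group with presentation ⟨v₁,v₂,h | v₁hv₁⁻¹h⁻¹, v₂hv₂⁻¹h, v₁²v₂²h⁻¹⟩ (the fundamental group of N₄). Then there are exactly 3 surjective homomorphisms G → ℤ/2, each sending h to 0; the one with φ(v₁)=φ(v₂)=1 factors through ℤ via ψ(v₁)=1, ψ(v₂)=-1, ψ(h)=0, while the two epimorphisms with {φ(v₁),φ(v₂)}={0,1} admit no factorization through ℤ. -/

import Mathlib

open FreeGroup

/-- Relators of π₁(N₄) = ⟨v₁,v₂,h | v₁hv₁⁻¹h⁻¹, v₂hv₂⁻¹h, v₁²v₂²h⁻¹⟩,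
generators v₁=0, v₂=1, h=2. -/
def relsN4 : Set (FreeGroup (Fin 3)) :=
  { of 0 * of 2 * (of 0)⁻¹ * (of 2)⁻¹,
    of 1 * of 2 * (of 1)⁻¹ * of 2,
    of 0 ^ 2 * of 1 ^ 2 * (of 2)⁻¹ }

/-- Reduction mod 2, multiplicatively. -/
def mod2 : Multiplicative ℤ →* Multiplicative (ZMod 2) :=
  AddMonoidHom.toMultiplicative (Int.castAddHom (ZMod 2))

/-!
In an abelian target the relations say that φ(h)² = 1 (from v₂hv₂⁻¹h) and
φ(h) = φ(v₁)²φ(v₂)². Into ℤ/2 all squares vanish, so φ(h) = 0 and φ is an arbitrary pair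
(φ(v₁), φ(v₂)): four homomorphisms, of which the three nonzero ones are onto since ℤ/2 has
prime order. Into the torsion-free group ℤ they force φ(h) = 0 and φ(v₁) = -φ(v₂), so every
reduction mod 2 of a map to ℤ takes the same value on v₁ and v₂.
-/

theorem MonoidHom.surjective_iff_ne_one_of_prime_card {G H : Type*} [Group G] [Group H]
    (hH : (Nat.card H).Prime) (f : G →* H) : Function.Surjective f ↔ f ≠ 1 := by
  have : Fact (Nat.card H).Prime := ⟨hH⟩
  have : Finite H := Nat.finite_of_card_ne_zero hH.ne_zero
  have : Nontrivial H := Finite.one_lt_card_iff_nontrivial.mp hH.one_lt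
  rw [← MonoidHom.range_eq_top, ← not_iff_not, not_not, ← MonoidHom.range_eq_bot_iff]
  rcases f.range.eq_bot_or_eq_top_of_prime_card with h | h <;> simp [h]

section Relations

variable {A : Type*}

theorem map_of_two_eq_sq_mul_sq [Group A] (φ : PresentedGroup relsN4 →* A) :
    φ (.of 2) = φ (.of 0) ^ 2 * φ (.of 1) ^ 2 := by
  have h := congrArg φ (PresentedGroup.one_of_mem (rels := relsN4)
    (x := of 0 ^ 2 * of 1 ^ 2 * (of 2)⁻¹) (by simp [relsN4]))
  simp only [_root_.map_mul, _root_.map_inv, _root_.map_pow, _root_.map_one] at h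
  exact (mul_inv_eq_one.mp h).symm

theorem map_of_two_sq_eq_one [CommGroup A] (φ : PresentedGroup relsN4 →* A) :
    φ (.of 2) ^ 2 = 1 := by
  have h := congrArg φ (PresentedGroup.one_of_mem (rels := relsN4)
    (x := of 1 * of 2 * (of 1)⁻¹ * of 2) (by simp [relsN4]))
  simp only [_root_.map_mul, _root_.map_inv, _root_.map_one] at h
  change φ (.of 1) * φ (.of 2) * (φ (.of 1))⁻¹ * φ (.of 2) = 1 at h
  rwa [mul_inv_cancel_comm, ← sq] at h

theorem map_of_two_eq_one_of_sq_eq_one [Group A] (hA : ∀ x : A, x ^ 2 = 1)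
    (φ : PresentedGroup relsN4 →* A) : φ (.of 2) = 1 := by
  rw [map_of_two_eq_sq_mul_sq, hA, hA, one_mul]

theorem map_of_two_eq_one_of_torsionFree [CommGroup A] [IsMulTorsionFree A]
    (φ : PresentedGroup relsN4 →* A) : φ (.of 2) = 1 :=
  (pow_eq_one_iff_left two_ne_zero).mp (map_of_two_sq_eq_one φ)

theorem map_of_zero_mul_map_of_one_eq_one [CommGroup A] [IsMulTorsionFree A]
    (φ : PresentedGroup relsN4 →* A) : φ (.of 0) * φ (.of 1) = 1 := by
  rw [← pow_eq_one_iff_left two_ne_zero, mul_pow, ← map_of_two_eq_sq_mul_sq,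
    map_of_two_eq_one_of_torsionFree]

end Relations

section Lift

variable {A : Type*} [Group A]

def liftN4 (a b : A) (hab : a ^ 2 * b ^ 2 = 1) : PresentedGroup relsN4 →* A :=
  PresentedGroup.toGroup (f := ![a, b, 1]) (by
    rintro r (rfl | rfl | rfl) <;> simp [hab])

variable (a b : A) (hab : a ^ 2 * b ^ 2 = 1)

@[simp] theorem liftN4_of_zero : liftN4 a b hab (.of 0) = a := PresentedGroup.toGroup.of _

@[simp] theorem liftN4_of_one : liftN4 a b hab (.of 1) = b := PresentedGroup.toGroup.of _

@[simp] theorem liftN4_of_two : liftN4 a b hab (.of 2) = 1 := PresentedGroup.toGroup.of _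

end Lift

def homEquivOfSqEqOne {A : Type*} [Group A] (hA : ∀ x : A, x ^ 2 = 1) :
    (PresentedGroup relsN4 →* A) ≃ A × A where
  toFun φ := (φ (.of 0), φ (.of 1))
  invFun p := liftN4 p.1 p.2 (by rw [hA, hA, one_mul])
  left_inv φ := by
    refine PresentedGroup.ext fun i => ?_
    fin_cases i
    · simp
    · simp
    · simp [map_of_two_eq_one_of_sq_eq_one hA φ]
  right_inv p := by simp

theorem card_surjective_hom_zmod_two :
    Nat.card {φ : PresentedGroup relsN4 →* Multiplicative (ZMod 2) //
      Function.Surjective φ} = 3 := by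
  let e := homEquivOfSqEqOne (A := Multiplicative (ZMod 2)) (by decide)
  have hsurj (φ : PresentedGroup relsN4 →* Multiplicative (ZMod 2)) : Function.Surjective φ ↔ e φ ≠ 1 := by
    rw [MonoidHom.surjective_iff_ne_one_of_prime_card (by simpa using Nat.prime_two) φ,
      Ne, Ne, e.injective.eq_iff' (b := 1) (c := 1) rfl]
  rw [Nat.card_congr (e.subtypeEquiv (q := (· ≠ 1)) hsurj), Nat.card_eq_fintype_card]
  decide

theorem mod2_comp_map_of_zero_eq_map_of_one (ψ : PresentedGroup relsN4 →* Multiplicative ℤ) :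
    mod2.comp ψ (.of 0) = mod2.comp ψ (.of 1) := by
  have hinv : ∀ x : Multiplicative (ZMod 2), x⁻¹ = x := by decide
  rw [MonoidHom.comp_apply, eq_inv_of_mul_eq_one_left (map_of_zero_mul_map_of_one_eq_one ψ),
    _root_.map_inv, hinv, MonoidHom.comp_apply]

/-- There are exactly 3 epimorphisms π₁(N₄) → ℤ/2, each sending h to 0; the one
with φ(v₁)=φ(v₂)=1 factors through ℤ via ψ(v₁)=1, ψ(v₂)=-1, ψ(h)=0, while the
two with {φ(v₁),φ(v₂)}={0,1} admit no factorization through ℤ. -/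
theorem stmt19 :
    Nat.card {φ : PresentedGroup relsN4 →* Multiplicative (ZMod 2) //
        Function.Surjective φ} = 3 ∧
    (∀ φ : PresentedGroup relsN4 →* Multiplicative (ZMod 2), Function.Surjective φ →
      φ (PresentedGroup.of 2) = Multiplicative.ofAdd (0 : ZMod 2)) ∧
    (∀ φ : PresentedGroup relsN4 →* Multiplicative (ZMod 2),
      φ (PresentedGroup.of 0) = Multiplicative.ofAdd (1 : ZMod 2) →
      φ (PresentedGroup.of 1) = Multiplicative.ofAdd (1 : ZMod 2) →
      φ (PresentedGroup.of 2) = Multiplicative.ofAdd (0 : ZMod 2) →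
      ∃ ψ : PresentedGroup relsN4 →* Multiplicative ℤ,
        ψ (PresentedGroup.of 0) = Multiplicative.ofAdd (1 : ℤ) ∧
        ψ (PresentedGroup.of 1) = Multiplicative.ofAdd (-1 : ℤ) ∧
        ψ (PresentedGroup.of 2) = Multiplicative.ofAdd (0 : ℤ) ∧
        φ = mod2.comp ψ) ∧
    (∀ φ : PresentedGroup relsN4 →* Multiplicative (ZMod 2),
      ((φ (PresentedGroup.of 0) = Multiplicative.ofAdd (1 : ZMod 2) ∧
          φ (PresentedGroup.of 1) = Multiplicative.ofAdd (0 : ZMod 2)) ∨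
        (φ (PresentedGroup.of 0) = Multiplicative.ofAdd (0 : ZMod 2) ∧
          φ (PresentedGroup.of 1) = Multiplicative.ofAdd (1 : ZMod 2))) →
      φ (PresentedGroup.of 2) = Multiplicative.ofAdd (0 : ZMod 2) →
      ¬ ∃ ψ : PresentedGroup relsN4 →* Multiplicative ℤ, φ = mod2.comp ψ) := by
  refine ⟨card_surjective_hom_zmod_two,
    fun φ _ => map_of_two_eq_one_of_sq_eq_one (by decide) φ, ?_, ?_⟩
  · intro φ h0 h1 h2
    let ψ := liftN4 (Multiplicative.ofAdd (1 : ℤ)) (Multiplicative.ofAdd (-1)) rfl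
    refine ⟨ψ, liftN4_of_zero .., liftN4_of_one .., liftN4_of_two .., ?_⟩
    refine PresentedGroup.ext fun i => ?_
    fin_cases i
    · simp [ψ, h0]; rfl
    · simp [ψ, h1]; rfl
    · simp [ψ, h2]
  · rintro φ hφ - ⟨ψ, rfl⟩
    have h := mod2_comp_map_of_zero_eq_map_of_one ψ
    rcases hφ with ⟨h0, h1⟩ | ⟨h0, h1⟩ <;> rw [h0, h1] at h <;> exact absurd h (by decide)
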